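/- Let H₁ = [[f₁,u₁],[g₁,v₁]] and H₂ = [[f₂,u₂],[g₂,v₂]] with all entries in L^∞, and suppose there is a nonzero constant λ such that conj(f₁) − conj(λ)·conj(u₁), g₁ − λv₁, g₂ − λf₂, and conj(v₂) − conj(λ)·conj(u₂) all lie in H^∞. Then, with respect to the decomposition L² = H² ⊕ z̄·conj(H²), the product R_{H₁}R_{H₂} equals the operator matrix [[T_{f₁f₂}, H*_{(1/conj(λ))·conj(f₁)·conj(v₂)}],[H_{λv₁f₂}, T̃_{v₁v₂}]]; in particular R_{H₁}R_{H₂} is the generalized Cauchy singular integral operator with symbol [[f₁f₂, (1/λ)f₁v₂],[λv₁f₂, v₁v₂]]. -/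

import Mathlib

noncomputable section

open MeasureTheory Complex ComplexConjugate InnerProductSpace ContinuousLinearMap

namespace GSIO

instance : Fact (0 < 2 * Real.pi) := ⟨by positivity⟩

/-- The circle, modeled as `ℝ / 2πℤ`. -/
abbrev Circ : Type := AddCircle (2 * Real.pi)

/-- Normalized Haar (arc-length) measure on the circle. -/
abbrev μC : Measure Circ := AddCircle.haarAddCircle

/-- `L²` of the circle. -/
abbrev L2 : Type := Lp ℂ 2 μC

/-- `L^∞` of the circle. -/
abbrev Linf : Type := Lp ℂ ⊤ μC

/-- The Hardy space `H²`: those `L²` functions whose negative Fourier coefficients vanish. -/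
def Hardy : Submodule ℂ L2 where
  carrier := {f : L2 | ∀ n : ℤ, n < 0 → fourierCoeff (f : Circ → ℂ) n = 0}
  zero_mem' := by
    intro n hn
    rw [← fourierBasis_repr]
    simp
  add_mem' := by
    intro a b ha hb n hn
    have ha' := ha n hn
    have hb' := hb n hn
    rw [← fourierBasis_repr] at ha' hb' ⊢
    rw [map_add, lp.coeFn_add, Pi.add_apply, ha', hb', add_zero]
  smul_mem' := by
    intro c a ha n hn
    have ha' := ha n hn
    rw [← fourierBasis_repr] at ha' ⊢
    rw [_root_.map_smul, lp.coeFn_smul, Pi.smul_apply, ha', smul_zero]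

theorem isClosed_Hardy : IsClosed (Hardy : Set L2) := by
  have h : (Hardy : Set L2) =
      ⋂ n : {m : ℤ // m < 0}, (fun f : L2 =>
        (innerSL ℂ (fourierBasis (T := 2 * Real.pi) n.1)) f) ⁻¹' {0} := by
    ext f
    simp only [Set.mem_iInter, Set.mem_preimage, Set.mem_singleton_iff, SetLike.mem_coe]
    constructor
    · intro hf n
      have h1 := hf n.1 n.2
      rw [← fourierBasis_repr, fourierBasis.repr_apply_apply] at h1
      simpa using h1
    · intro hf n hn
      have h1 := hf ⟨n, hn⟩
      rw [← fourierBasis_repr, fourierBasis.repr_apply_apply]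
      simpa using h1
  rw [h]
  exact isClosed_iInter fun n =>
    isClosed_singleton.preimage (innerSL ℂ _).continuous

instance : CompleteSpace Hardy := isClosed_Hardy.completeSpace_coe

/-- The Riesz projection `P₊`, i.e. the orthogonal projection of `L²` onto `H²`. -/
def Pp : L2 →L[ℂ] L2 := Hardy.subtypeL.comp (Hardy.orthogonalProjectionOnto)

/-- `P₋ = I − P₊`. -/
def Pm : L2 →L[ℂ] L2 := ContinuousLinearMap.id ℂ L2 - Pp

/-- The pointwise product of an `L^∞` function with an `L²` function, as an `L²` function. -/
def mulFun (φ : Linf) (x : L2) : L2 :=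
  ((Lp.memLp x).smul (r := 2) (Lp.memLp φ)).toLp ((φ : Circ → ℂ) • (x : Circ → ℂ))

theorem mulFun_add (φ : Linf) (x y : L2) : mulFun φ (x + y) = mulFun φ x + mulFun φ y := by
  rw [mulFun, mulFun, mulFun, ← MemLp.toLp_add]
  apply MemLp.toLp_congr
  filter_upwards [Lp.coeFn_add x y] with t ht
  have ht' : ((x + y : L2) : Circ → ℂ) t = (x : Circ → ℂ) t + (y : Circ → ℂ) t := by
    simpa using ht
  simp only [Pi.mul_apply, Pi.smul_apply, Pi.add_apply, smul_eq_mul, ht']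
  ring

theorem mulFun_smul (c : ℂ) (φ : Linf) (x : L2) : mulFun φ (c • x) = c • mulFun φ x := by
  rw [mulFun, mulFun, ← MemLp.toLp_const_smul]
  apply MemLp.toLp_congr
  filter_upwards [Lp.coeFn_smul c x] with t ht
  have ht' : ((c • x : L2) : Circ → ℂ) t = c * (x : Circ → ℂ) t := by
    simpa using ht
  simp only [Pi.mul_apply, Pi.smul_apply, smul_eq_mul, ht']
  ring

theorem norm_mulFun_le (φ : Linf) (x : L2) : ‖mulFun φ x‖ ≤ ‖φ‖ * ‖x‖ := by
  rw [mulFun, Lp.norm_toLp]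
  have h := eLpNorm_smul_le_eLpNorm_top_mul_eLpNorm (μ := μC) 2
    (Lp.aestronglyMeasurable x) (φ : Circ → ℂ)
  refine le_trans (ENNReal.toReal_mono ?_ h) ?_
  · exact ENNReal.mul_ne_top (Lp.eLpNorm_ne_top φ) (Lp.eLpNorm_ne_top x)
  · rw [ENNReal.toReal_mul, Lp.norm_def, Lp.norm_def]

/-- The multiplication operator `M_φ` on `L²`, for `φ ∈ L^∞`. -/
def mul (φ : Linf) : L2 →L[ℂ] L2 :=
  LinearMap.mkContinuous
    { toFun := mulFun φ
      map_add' := mulFun_add φ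
      map_smul' := fun c x => mulFun_smul c φ x }
    ‖φ‖ (fun x => norm_mulFun_le φ x)

/-- Pointwise product in `L^∞`. -/
def mulInf (φ ψ : Linf) : Linf :=
  ((Lp.memLp ψ).smul (r := ⊤) (Lp.memLp φ)).toLp ((φ : Circ → ℂ) • (ψ : Circ → ℂ))

/-- Complex conjugation on `L^∞`. -/
def conjInf (φ : Linf) : Linf :=
  (show MemLp (fun t => star ((φ : Circ → ℂ) t)) ⊤ μC from
    ⟨continuous_star.comp_aestronglyMeasurable (Lp.aestronglyMeasurable φ), by
      rw [eLpNorm_congr_norm_ae (g := (φ : Circ → ℂ))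
        (Filter.Eventually.of_forall fun t => norm_star _)]
      exact Lp.eLpNorm_lt_top φ⟩).toLp _

/-- Complex conjugation on `L²`. -/
def conjL2 (x : L2) : L2 :=
  (show MemLp (fun t => star ((x : Circ → ℂ) t)) 2 μC from
    ⟨continuous_star.comp_aestronglyMeasurable (Lp.aestronglyMeasurable x), by
      rw [eLpNorm_congr_norm_ae (g := (x : Circ → ℂ))
        (Filter.Eventually.of_forall fun t => norm_star _)]
      exact Lp.eLpNorm_lt_top x⟩).toLp _

/-- The inclusion `L^∞ ⊆ L²` (the measure is finite). -/
def toL2 (φ : Linf) : L2 := ((Lp.memLp φ).mono_exponent le_top).toLp φ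

/-- The constant function `c` as an element of `L^∞`. -/
def constInf (c : ℂ) : Linf := (memLp_const c).toLp (fun _ => c)

/-- An `L^∞` function is constant (a.e.). -/
def IsConst (φ : Linf) : Prop := ∃ c : ℂ, φ = constInf c

/-- `φ ∈ H^∞ = L^∞ ∩ H²`: the negative Fourier coefficients of `φ` vanish. -/
def MemHinf (φ : Linf) : Prop := ∀ n : ℤ, n < 0 → fourierCoeff (φ : Circ → ℂ) n = 0

/-- The coordinate function `z` as an element of `L^∞`. -/
def zInf : Linf := fourierLp (T := 2 * Real.pi) ⊤ 1

/-- The function `z̄` as an element of `L^∞`. -/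
def zbarInf : Linf := fourierLp (T := 2 * Real.pi) ⊤ (-1)

/-- The antiunitary operator `V : h ↦ z̄ ⬝ conj h` on `L²`. -/
def Vmap (x : L2) : L2 := mul zbarInf (conjL2 x)

/-- `φ₋ = P₋ φ` for `φ ∈ L^∞`, viewed inside `L²`. -/
def mI (φ : Linf) : L2 := Pm (toL2 φ)

/-- The rank-one operator `p ⊗ q : x ↦ ⟪x, q⟫ · p` (the inner product being conjugate-linear
in `q`). -/
def rankOne {E : Type*} [NormedAddCommGroup E] [InnerProductSpace ℂ E] (p q : E) : E →L[ℂ] E :=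
  (innerSL ℂ q).smulRight p

/-- The Hilbert space direct sum `L² ⊕ L²`. -/
abbrev L2sq : Type := WithLp 2 (L2 × L2)

/-- A pair of `L²` functions, viewed as a vector in `L² ⊕ L²`. -/
def pair (x y : L2) : L2sq := (WithLp.equiv 2 (L2 × L2)).symm (x, y)

/-- Notation for the pointwise product in `L^∞`. -/
scoped infixl:70 " ⊙ " => GSIO.mulInf

/-- The Toeplitz operator `T_φ = P₊ M_φ P₊` (viewed as acting on the corner `H²` of `L²`). -/
def Toeplitz (φ : Linf) : L2 →L[ℂ] L2 := Pp ∘L mul φ ∘L Pp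

/-- The Hankel operator `H_φ = P₋ M_φ P₊ : H² → (H²)^⊥` (as a corner operator on `L²`). -/
def Hankel (φ : Linf) : L2 →L[ℂ] L2 := Pm ∘L mul φ ∘L Pp

/-- The dual Toeplitz operator `T̃_φ = P₋ M_φ P₋` on `(H²)^⊥` (as a corner operator on `L²`). -/
def dualToeplitz (φ : Linf) : L2 →L[ℂ] L2 := Pm ∘L mul φ ∘L Pm

/-- The generalized Cauchy singular integral operator with symbol `[[f, u], [g, v]]`:
`R x = P₊ f P₊ x + P₋ g P₊ x + P₊ u P₋ x + P₋ v P₋ x`. -/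
def Rop (f u g v : Linf) : L2 →L[ℂ] L2 :=
  Pp ∘L mul f ∘L Pp + Pm ∘L mul g ∘L Pp + Pp ∘L mul u ∘L Pm + Pm ∘L mul v ∘L Pm

/-- The singular integral operator `S_{f,g} = M_f P₊ + M_g P₋` on `L²`. -/
def Sop (f g : Linf) : L2 →L[ℂ] L2 := mul f ∘L Pp + mul g ∘L Pm



/-- Negation `t ↦ -t` preserves the Haar measure of the circle. -/
theorem mp_neg : MeasurePreserving (fun t : Circ => -t) μC μC :=
  Measure.measurePreserving_neg μC

/-- Composition with `t ↦ -t` on `L²`. -/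
def reflL2 : L2 →L[ℂ] L2 :=
  (Lp.compMeasurePreservingₗᵢ ℂ (fun t : Circ => -t) mp_neg).toContinuousLinearMap

/-- Composition with `t ↦ -t` on `L^∞`: for `φ ∈ L^∞`, `φ̃(z) = φ(z̄)`. -/
def reflInf (φ : Linf) : Linf := Lp.compMeasurePreserving (fun t : Circ => -t) mp_neg φ

/-- `φ* (z) = conj (φ(z̄))`. -/
def starInf (φ : Linf) : Linf := conjInf (reflInf φ)

/-- The flip operator `J : (Jh)(z) = z̄ · h(z̄)` on `L²`. -/
def Jop : L2 →L[ℂ] L2 := mul zbarInf ∘L reflL2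

/-- The Hankel operator `𝕳_φ = P₊ M_φ J` on `H²` (as a corner operator on `L²`). -/
def HankelPlus (φ : Linf) : L2 →L[ℂ] L2 := Pp ∘L mul φ ∘L Jop ∘L Pp

/-- The adjoint `H*_φ` of the Hankel operator `H_φ`. -/
def HankelAdj (φ : Linf) : L2 →L[ℂ] L2 := ContinuousLinearMap.adjoint (Hankel φ)

/-- `θ ∈ L^∞` is an inner function: `θ ∈ H^∞` and `|θ| = 1` a.e. -/
def IsInner (θ : Linf) : Prop := MemHinf θ ∧ ∀ᵐ t ∂μC, ‖(θ : Circ → ℂ) t‖ = 1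

/-- The orthogonal projection of `L²` onto `K_θ^⊥ = θH² ⊕ z̄·conj(H²)`, namely
`P₋ + M_θ P₊ M_{conj θ}`. -/
def Qproj (θ : Linf) : L2 →L[ℂ] L2 := Pm + mul θ ∘L Pp ∘L mul (conjInf θ)

/-!
Write `Q = P₋ = 1 - P₊`. A Hankel operator with symbol in `H^∞` vanishes, so the hypotheses say
`P₊ f₁ Q = λ P₊ u₁ Q`, `Q g₁ P₊ = λ Q v₁ P₊`, `Q g₂ P₊ = λ Q f₂ P₊` and `P₊ v₂ Q = λ P₊ u₂ Q`.
With these, the two operators factor as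
`R_{H₁} = (P₊ f₁ + λ Q v₁)(P₊ + λ⁻¹ Q)` and `R_{H₂} = (P₊ + λ Q)(f₂ P₊ + λ⁻¹ v₂ Q)`.
The middle factors are inverse to each other because `P₊` is idempotent, hence
`R_{H₁} R_{H₂} = (P₊ f₁ + λ Q v₁)(f₂ P₊ + λ⁻¹ v₂ Q)`, whose four corners are the claimed ones.
-/

section BlockSum

variable {𝕜 A : Type*} [Field 𝕜] [Ring A] [Algebra 𝕜 A]

def blockSum (P F U G V : A) : A :=
  P * F * P + (1 - P) * G * P + P * U * (1 - P) + (1 - P) * V * (1 - P)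

theorem _root_.IsIdempotentElem.add_inv_smul_one_sub_mul_add_smul_one_sub {P : A}
    (hP : IsIdempotentElem P) {c : 𝕜} (hc : c ≠ 0) :
    (P + c⁻¹ • (1 - P)) * (P + c • (1 - P)) = 1 := by
  simp only [mul_add, add_mul, smul_mul_assoc, mul_smul_comm, smul_smul, hP.eq,
    hP.mul_one_sub_self, hP.one_sub_mul_self, hP.one_sub.eq, mul_inv_cancel₀ hc, one_smul,
    smul_zero, add_zero, zero_add, add_sub_cancel]

theorem blockSum_eq_mul_left {P F U G V : A} {c : 𝕜} (hc : c ≠ 0)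
    (hU : P * F * (1 - P) = c • (P * U * (1 - P)))
    (hG : (1 - P) * G * P = c • ((1 - P) * V * P)) :
    blockSum P F U G V = (P * F + c • ((1 - P) * V)) * (P + c⁻¹ • (1 - P)) := by
  rw [blockSum, hG, (eq_inv_smul_iff₀ hc).mpr hU.symm]
  simp only [mul_add, add_mul, smul_add, smul_mul_assoc, mul_smul_comm, smul_smul,
    inv_mul_cancel₀ hc, one_smul, mul_assoc]
  abel

theorem blockSum_eq_mul_right {P F U G V : A} {c : 𝕜} (hc : c ≠ 0)
    (hG : (1 - P) * G * P = c • ((1 - P) * F * P))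
    (hV : P * V * (1 - P) = c • (P * U * (1 - P))) :
    blockSum P F U G V = (P + c • (1 - P)) * (F * P + c⁻¹ • (V * (1 - P))) := by
  rw [blockSum, hG, (eq_inv_smul_iff₀ hc).mpr hV.symm]
  simp only [mul_add, add_mul, smul_add, smul_mul_assoc, mul_smul_comm, smul_smul,
    inv_mul_cancel₀ hc, one_smul, mul_assoc]
  abel

theorem blockSum_mul_blockSum {P F₁ U₁ G₁ V₁ F₂ U₂ G₂ V₂ : A} (hP : IsIdempotentElem P)
    {c : 𝕜} (hc : c ≠ 0)
    (h₁ : P * F₁ * (1 - P) = c • (P * U₁ * (1 - P)))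
    (h₂ : (1 - P) * G₁ * P = c • ((1 - P) * V₁ * P))
    (h₃ : (1 - P) * G₂ * P = c • ((1 - P) * F₂ * P))
    (h₄ : P * V₂ * (1 - P) = c • (P * U₂ * (1 - P))) :
    blockSum P F₁ U₁ G₁ V₁ * blockSum P F₂ U₂ G₂ V₂ =
      blockSum P (F₁ * F₂) (c⁻¹ • (F₁ * V₂)) (c • (V₁ * F₂)) (V₁ * V₂) := by
  rw [blockSum_eq_mul_left hc h₁ h₂, blockSum_eq_mul_right hc h₃ h₄, mul_assoc,
    ← mul_assoc (P + c⁻¹ • (1 - P)), hP.add_inv_smul_one_sub_mul_add_smul_one_sub hc, one_mul,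
    blockSum]
  simp only [mul_add, add_mul, smul_add, smul_mul_assoc, mul_smul_comm, smul_smul,
    inv_mul_cancel₀ hc, one_smul, mul_assoc]
  abel

end BlockSum

theorem mul_coeFn (φ : Linf) (x : L2) :
    (mul φ x : Circ → ℂ) =ᵐ[μC] fun t => (φ : Circ → ℂ) t * (x : Circ → ℂ) t :=
  MemLp.coeFn_toLp ((Lp.memLp x).smul (Lp.memLp φ))

theorem mulInf_coeFn (φ ψ : Linf) :
    ((φ ⊙ ψ : Linf) : Circ → ℂ) =ᵐ[μC] fun t => (φ : Circ → ℂ) t * (ψ : Circ → ℂ) t :=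
  MemLp.coeFn_toLp ((Lp.memLp ψ).smul (Lp.memLp φ))

theorem conjInf_coeFn (φ : Linf) :
    ((conjInf φ : Linf) : Circ → ℂ) =ᵐ[μC] fun t => star ((φ : Circ → ℂ) t) :=
  MemLp.coeFn_toLp _

theorem conjInf_conjInf (φ : Linf) : conjInf (conjInf φ) = φ := by
  apply Lp.ext
  filter_upwards [conjInf_coeFn (conjInf φ), conjInf_coeFn φ] with t h1 h2
  rw [h1, h2, star_star]

theorem conjInf_smul (c : ℂ) (φ : Linf) : conjInf (c • φ) = conj c • conjInf φ := by
  apply Lp.ext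
  filter_upwards [conjInf_coeFn (c • φ), conjInf_coeFn φ, Lp.coeFn_smul c φ,
    Lp.coeFn_smul (conj c) (conjInf φ)] with t h1 h2 h3 h4
  rw [h1, h3, h4, Pi.smul_apply, Pi.smul_apply, h2, smul_eq_mul, smul_eq_mul, star_mul',
    starRingEnd_apply]

theorem conjInf_mulInf (φ ψ : Linf) : conjInf (φ ⊙ ψ) = conjInf φ ⊙ conjInf ψ := by
  apply Lp.ext
  filter_upwards [conjInf_coeFn (φ ⊙ ψ), mulInf_coeFn φ ψ,
    mulInf_coeFn (conjInf φ) (conjInf ψ), conjInf_coeFn φ, conjInf_coeFn ψ] with t h1 h2 h3 h4 h5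
  rw [h1, h2, h3, h4, h5, star_mul']

theorem mul_mulInf (φ ψ : Linf) : mul (φ ⊙ ψ) = mul φ * mul ψ := by
  refine ContinuousLinearMap.ext fun x => Lp.ext ?_
  filter_upwards [mul_coeFn (φ ⊙ ψ) x, mul_coeFn φ (mul ψ x), mul_coeFn ψ x,
    mulInf_coeFn φ ψ] with t h1 h2 h3 h4
  simp only [mul_apply_eq_comp, h1, h2, h3, h4]
  ring

theorem mul_smul_symbol (c : ℂ) (φ : Linf) : mul (c • φ) = c • mul φ := by
  refine ContinuousLinearMap.ext fun x => Lp.ext ?_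
  filter_upwards [mul_coeFn (c • φ) x, mul_coeFn φ x, Lp.coeFn_smul c φ,
    Lp.coeFn_smul c (mul φ x)] with t h1 h2 h3 h4
  simp only [smul_apply, h1, h3, h4, Pi.smul_apply, h2, smul_eq_mul]
  ring

theorem mul_sub_symbol (φ ψ : Linf) : mul (φ - ψ) = mul φ - mul ψ := by
  refine ContinuousLinearMap.ext fun x => Lp.ext ?_
  filter_upwards [mul_coeFn (φ - ψ) x, mul_coeFn φ x, mul_coeFn ψ x, Lp.coeFn_sub φ ψ,
    Lp.coeFn_sub (mul φ x) (mul ψ x)] with t h1 h2 h3 h4 h5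
  simp only [sub_apply, h1, h4, h5, Pi.sub_apply, h2, h3]
  ring

theorem adjoint_mul (φ : Linf) : adjoint (mul φ) = mul (conjInf φ) := by
  refine ((eq_adjoint_iff _ _).mpr fun x y => ?_).symm
  rw [L2.inner_def, L2.inner_def]
  refine integral_congr_ae ?_
  filter_upwards [mul_coeFn (conjInf φ) x, mul_coeFn φ y, conjInf_coeFn φ] with t h1 h2 h3
  simp only [h1, h2, h3, RCLike.inner_apply, starRingEnd_apply, star_mul', star_star]
  ring

theorem isStarProjection_Pp : IsStarProjection Pp := isStarProjection_starProjection

theorem Pm_eq_one_sub : Pm = 1 - Pp := rfl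

theorem adjoint_Pp : adjoint Pp = Pp := isStarProjection_Pp.isSelfAdjoint

theorem adjoint_Pm : adjoint Pm = Pm := isStarProjection_Pp.one_sub.isSelfAdjoint

theorem fourierCoeff_mul_fourierLp (φ : Linf) (m n : ℤ) :
    fourierCoeff ((mul φ (fourierLp 2 m) : L2) : Circ → ℂ) n =
      fourierCoeff (φ : Circ → ℂ) (n - m) := by
  have hprod : ((mul φ (fourierLp 2 m) : L2) : Circ → ℂ) =ᵐ[μC]
      fun t => (φ : Circ → ℂ) t * fourier m t := by
    filter_upwards [mul_coeFn φ (fourierLp 2 m), coeFn_fourierLp 2 m] with t h h'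
    rw [h, h']
  simp only [fourierCoeff]
  refine integral_congr_ae ?_
  filter_upwards [hprod] with t ht
  rw [ht, show -(n - m) = -n + m by ring, fourier_add]
  simp only [smul_eq_mul]
  ring

theorem mul_mem_Hardy {φ : Linf} (hφ : MemHinf φ) {x : L2} (hx : x ∈ Hardy) :
    mul φ x ∈ Hardy := by
  intro n hn
  set L := innerSL ℂ (fourierBasis (T := 2 * Real.pi) n) ∘L mul φ
  -- `L` kills every term of the Fourier expansion of `x`: for `i < 0` the coefficient vanishes,
  -- for `i ≥ 0` the `n`-th coefficient of `φ e_i` is `φ̂(n - i) = 0`.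
  have hterm (i : ℤ) : L (fourierBasis.repr x i • fourierBasis i) = 0 := by
    rcases lt_or_ge i 0 with hi | hi
    · rw [fourierBasis_repr, hx i hi, zero_smul, map_zero]
    · have hLi :
          L (fourierBasis i) = fourierCoeff ((mul φ (fourierLp 2 i) : L2) : Circ → ℂ) n := by
        rw [← fourierBasis_repr, fourierBasis.repr_apply_apply, coe_fourierBasis]
        simp [L]
      rw [map_smul, hLi, fourierCoeff_mul_fourierLp, hφ _ (by omega), smul_zero]
  have hsum := (fourierBasis.hasSum_repr x).mapL L
  rw [← fourierBasis_repr, fourierBasis.repr_apply_apply]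
  exact (hsum.congr_fun fun i => (hterm i).symm).unique hasSum_zero

theorem Hankel_eq_zero {φ : Linf} (hφ : MemHinf φ) : Hankel φ = 0 := by
  refine ContinuousLinearMap.ext fun x => ?_
  have hmem : mul φ (Pp x) ∈ Hardy :=
    mul_mem_Hardy hφ (Submodule.starProjection_apply_mem Hardy x)
  simp only [Hankel, Pm, ContinuousLinearMap.comp_apply, sub_apply, id_apply, zero_apply]
  rw [sub_eq_zero]
  exact (Submodule.starProjection_eq_self_iff.mpr hmem).symm

theorem Hankel_eq_smul_of_memHinf_sub {g v : Linf} {c : ℂ} (h : MemHinf (g - c • v)) :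
    Hankel g = c • Hankel v := by
  have h0 := Hankel_eq_zero h
  rwa [Hankel, mul_sub_symbol, mul_smul_symbol, sub_comp, comp_sub, smul_comp, comp_smul,
    sub_eq_zero] at h0

theorem HankelAdj_conjInf (φ : Linf) : HankelAdj (conjInf φ) = Pp ∘L mul φ ∘L Pm := by
  rw [HankelAdj, Hankel, adjoint_comp, adjoint_comp, adjoint_Pp, adjoint_Pm, adjoint_mul,
    conjInf_conjInf, comp_assoc]

theorem HankelAdj_conjInf_eq_smul {f u : Linf} {c : ℂ}
    (h : MemHinf (conjInf f - conj c • conjInf u)) :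
    HankelAdj (conjInf f) = c • HankelAdj (conjInf u) := by
  rw [HankelAdj, HankelAdj, Hankel_eq_smul_of_memHinf_sub h, map_smulₛₗ, starRingEnd_self_apply]

theorem Hankel_eq_mul (φ : Linf) : Hankel φ = (1 - Pp) * mul φ * Pp := by
  rw [Hankel, Pm_eq_one_sub, mul_def, mul_def, comp_assoc]

theorem HankelAdj_conjInf_eq_mul (φ : Linf) : HankelAdj (conjInf φ) = Pp * mul φ * (1 - Pp) := by
  rw [HankelAdj_conjInf, Pm_eq_one_sub, mul_def, mul_def, comp_assoc]

theorem Rop_eq_blockSum (f u g v : Linf) :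
    Rop f u g v = blockSum Pp (mul f) (mul u) (mul g) (mul v) := by
  simp only [Rop, blockSum, Pm_eq_one_sub, mul_def, comp_assoc]

theorem Rop_eq_operatorMatrix (f u g v : Linf) :
    Rop f u g v = Toeplitz f + HankelAdj (conjInf u) + Hankel g + dualToeplitz v := by
  rw [HankelAdj_conjInf, Rop, Toeplitz, Hankel, dualToeplitz, add_right_comm (_ ∘L _ ∘L Pp)]

theorem Rop_comp_Rop {lam : ℂ} (hlam : lam ≠ 0) {f₁ u₁ g₁ v₁ f₂ u₂ g₂ v₂ : Linf}
    (h1 : MemHinf (conjInf f₁ - conj lam • conjInf u₁))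
    (h2 : MemHinf (g₁ - lam • v₁)) (h3 : MemHinf (g₂ - lam • f₂))
    (h4 : MemHinf (conjInf v₂ - conj lam • conjInf u₂)) :
    Rop f₁ u₁ g₁ v₁ ∘L Rop f₂ u₂ g₂ v₂ =
      Rop (f₁ ⊙ f₂) (lam⁻¹ • (f₁ ⊙ v₂)) (lam • (v₁ ⊙ f₂)) (v₁ ⊙ v₂) := by
  have hcorner₁ := HankelAdj_conjInf_eq_smul h1
  have hcorner₂ := Hankel_eq_smul_of_memHinf_sub h2
  have hcorner₃ := Hankel_eq_smul_of_memHinf_sub h3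
  have hcorner₄ := HankelAdj_conjInf_eq_smul h4
  simp only [HankelAdj_conjInf_eq_mul, Hankel_eq_mul] at hcorner₁ hcorner₂ hcorner₃ hcorner₄
  simp only [← mul_def, Rop_eq_blockSum, mul_smul_symbol, mul_mulInf]
  exact blockSum_mul_blockSum isStarProjection_Pp.isIdempotentElem hlam hcorner₁ hcorner₂
    hcorner₃ hcorner₄

/-- If there is `λ ≠ 0` with `f̄₁ − λ̄ū₁, g₁ − λv₁, g₂ − λf₂, v̄₂ − λ̄ū₂ ∈ H^∞`,
then `R_{H₁}R_{H₂}` equals the operator matrix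
`[[T_{f₁f₂}, H*_{(1/λ̄)f̄₁v̄₂}],[H_{λv₁f₂}, T̃_{v₁v₂}]]`; in particular it is the GSIO with
symbol `[[f₁f₂, (1/λ)f₁v₂],[λv₁f₂, v₁v₂]]`. -/
theorem statement5 (lam : ℂ) (hlam : lam ≠ 0) (f₁ u₁ g₁ v₁ f₂ u₂ g₂ v₂ : Linf)
    (h1 : MemHinf (conjInf f₁ - conj lam • conjInf u₁))
    (h2 : MemHinf (g₁ - lam • v₁)) (h3 : MemHinf (g₂ - lam • f₂))
    (h4 : MemHinf (conjInf v₂ - conj lam • conjInf u₂)) :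
    Rop f₁ u₁ g₁ v₁ ∘L Rop f₂ u₂ g₂ v₂ =
        Toeplitz (f₁ ⊙ f₂) + HankelAdj ((conj lam)⁻¹ • (conjInf f₁ ⊙ conjInf v₂)) +
          Hankel (lam • (v₁ ⊙ f₂)) + dualToeplitz (v₁ ⊙ v₂) ∧
      Rop f₁ u₁ g₁ v₁ ∘L Rop f₂ u₂ g₂ v₂ =
        Rop (f₁ ⊙ f₂) (lam⁻¹ • (f₁ ⊙ v₂)) (lam • (v₁ ⊙ f₂)) (v₁ ⊙ v₂) := by
  have hprod := Rop_comp_Rop hlam h1 h2 h3 h4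
  refine ⟨?_, hprod⟩
  rw [hprod, Rop_eq_operatorMatrix, conjInf_smul, conjInf_mulInf, map_inv₀]

end GSIO
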